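/- Let S ⊆ (0,∞) be a countable set of positive reals. Then Q_S is ultrahomogeneous: every isometry between two finite subsets of Q_S extends to a surjective isometry of Q_S onto itself. -/

import Mathlib

/-- The ultrametric Urysohn space with distances in `S`, realized as the
set of finitely supported functions from `S` to `ℕ`. -/
def QS (S : Set ℝ) : Type := {x : S → ℕ // (Function.support x).Finite}

/-- The ultrametric on `QS S`: the largest `s ∈ S` at which `x` and `y`
differ, and `0` if `x = y` (the supremum of the empty set of reals is `0`). -/
noncomputable def qdist (S : Set ℝ) (x y : QS S) : ℝ :=
  sSup (Subtype.val '' {s : S | x.1 s ≠ y.1 s})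

/-- `Y ⊆ QS S'` is an isometric copy of `X ⊆ QS S`. -/
def IsCopyIn (S S' : Set ℝ) (X : Set (QS S)) (Y : Set (QS S')) : Prop :=
  ∃ e : X → QS S', Function.Injective e ∧ Set.range e = Y ∧
    ∀ a b : X, qdist S' (e a) (e b) = qdist S a.1 b.1

/-- `X` is an isometric copy of `QS S` inside `QS S`. -/
def IsCopyOfQS (S : Set ℝ) (X : Set (QS S)) : Prop :=
  ∃ e : QS S → QS S, Function.Injective e ∧ Set.range e = X ∧
    ∀ x y, qdist S (e x) (e y) = qdist S x y

/-- The reverse order `>` well-orders `S`: every nonempty subset of `S`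
has a greatest element. -/
def RevWellOrdered (S : Set ℝ) : Prop :=
  ∀ T ⊆ S, T.Nonempty → ∃ m ∈ T, ∀ t ∈ T, t ≤ m

/-- `b` is a metric ball of `QS S` with radius `r ∈ S ∪ {0}`. -/
def IsBall (S : Set ℝ) (b : Set (QS S)) (r : ℝ) : Prop :=
  (r ∈ S ∨ r = 0) ∧ ∃ x : QS S, b = {y | qdist S x y ≤ r}

/-- `r⁻`: the greatest element of `S` below `r` (and `0` if there is none). -/
noncomputable def rminus (S : Set ℝ) (r : ℝ) : ℝ := sSup {t | t ∈ S ∧ t < r}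

/-- `A` is small in the ball `b` of radius `r`. -/
def SmallIn (S : Set ℝ) (A b : Set (QS S)) (r : ℝ) : Prop :=
  (r = 0 ∧ A ∩ b = ∅) ∨
  (0 < r ∧ ∃ F : Finset (QS S), A ∩ b ⊆ ⋃ c ∈ F, {y | qdist S c y ≤ rminus S r})

/-- `χ` admits at most `l` values on copies of `X` inside a copy of `QS S'`,
for every coloring with `k` colors. -/
def BRDbound (S S' : Set ℝ) (X : Set (QS S)) (l : ℕ) : Prop :=
  ∀ k : ℕ, 0 < k → ∀ χ : Set (QS S') → Fin k,
    ∃ Q : Set (QS S'), IsCopyOfQS S' Q ∧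
      (χ '' {Y | IsCopyIn S S' X Y ∧ Y ⊆ Q}).ncard ≤ l

/-- `X ⊆ QS S` has big Ramsey degree `l` in `U_{S'}`. -/
def HasBigRamseyDegree (S S' : Set ℝ) (X : Set (QS S)) (l : ℕ) : Prop :=
  IsLeast {m : ℕ | 0 < m ∧ BRDbound S S' X m} l

/-! A point `x` of `QS S` is a branch through the tree whose nodes at level `s` are the tails
`x|_{(s,∞)}`, and `qdist S x y` is the level at which the branches of `x` and `y` split. So
permuting, at every node, the possible values of the next coordinate (the permutation `ρ s u`
below) is a bijective isometry, with an inverse of the same shape. A finite isometry `φ`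
prescribes at each node a partial map of `ℕ` with finite domain, injective because `φ` preserves
splitting levels; extend each one to a permutation (the identity at all but finitely many levels,
so that finite support is preserved). -/

theorem Equiv.Perm.exists_extending_of_eq_iff_eq {ι β : Type*} [Finite ι] (a b : ι → β)
    (h : ∀ i j, a i = a j ↔ b i = b j) : ∃ σ : Equiv.Perm β, ∀ i, σ (a i) = b i := by
  have : Finite (Set.range a) := Set.finite_range a
  have hinj : Function.Injective (b ∘ Set.rangeSplitting a) := fun x y hxy => by
    apply Subtype.ext
    rw [← Set.apply_rangeSplitting a x, ← Set.apply_rangeSplitting a y]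
    exact (h _ _).2 hxy
  obtain ⟨σ, hσ⟩ := Equiv.Perm.exists_extending_pair _ _ Subtype.val_injective hinj
  exact ⟨σ, fun i =>
    (hσ ⟨a i, i, rfl⟩).trans ((h _ _).1 (Set.apply_rangeSplitting a ⟨a i, i, rfl⟩))⟩

namespace QS

variable {S : Set ℝ}

noncomputable def tail (s : S) (x : S → ℕ) : S → ℕ := fun t => if s.1 < t.1 then x t else 0

theorem tail_eq_tail_iff {s : S} {x y : S → ℕ} :
    tail s x = tail s y ↔ ∀ t : S, s.1 < t.1 → x t = y t := by
  simp only [tail, funext_iff]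
  refine forall_congr' fun t => ?_
  by_cases h : s.1 < t.1 <;> simp [h]

theorem finite_ne (x y : QS S) : {s : S | x.1 s ≠ y.1 s}.Finite :=
  (x.2.union y.2).subset fun s hs => by
    by_contra h
    simp_all

theorem le_qdist {x y : QS S} {s : S} (h : x.1 s ≠ y.1 s) : s.1 ≤ qdist S x y :=
  le_csSup ((finite_ne x y).image _).bddAbove ⟨s, h, rfl⟩

theorem qdist_self (x : QS S) : qdist S x x = 0 := by
  simp [qdist]

theorem exists_eq_qdist {x y : QS S} (h : x ≠ y) :
    ∃ s : S, s.1 = qdist S x y ∧ tail s x.1 = tail s y.1 ∧ x.1 s ≠ y.1 s := by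
  obtain ⟨s₀, hs₀⟩ : ∃ s : S, x.1 s ≠ y.1 s := by
    by_contra! hall
    exact h (Subtype.ext (funext hall))
  have hne : (Subtype.val '' {s : S | x.1 s ≠ y.1 s}).Nonempty := ⟨_, s₀, hs₀, rfl⟩
  obtain ⟨s, hs, hmax⟩ := hne.csSup_mem ((finite_ne x y).image _)
  have hmax : s.1 = qdist S x y := hmax
  refine ⟨s, hmax, tail_eq_tail_iff.2 fun t hst => ?_, hs⟩
  by_contra ht
  exact (le_qdist ht).not_gt (hmax ▸ hst)

theorem qdist_eq_of_tail_eq_of_ne {x y : QS S} {s : S} (ht : tail s x.1 = tail s y.1)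
    (hs : x.1 s ≠ y.1 s) : qdist S x y = s := by
  refine le_antisymm (csSup_le ⟨_, s, hs, rfl⟩ ?_) (le_qdist hs)
  rintro _ ⟨t, htne, rfl⟩
  by_contra hst
  exact htne (tail_eq_tail_iff.1 ht t (not_le.1 hst))

theorem tail_eq_tail_iff_qdist_le {x y : QS S} {s : S} :
    tail s x.1 = tail s y.1 ↔ x = y ∨ qdist S x y ≤ s := by
  constructor
  · intro ht
    by_cases hxy : x = y
    · exact Or.inl hxy
    obtain ⟨t, htd, -, htne⟩ := exists_eq_qdist hxy
    rw [← htd]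
    exact Or.inr (not_lt.1 fun hst => htne (tail_eq_tail_iff.1 ht t hst))
  · rintro (rfl | hle)
    · rfl
    · exact tail_eq_tail_iff.2 fun t hst => by
        by_contra htne
        exact (hle.trans_lt hst).not_ge (le_qdist htne)

theorem qdist_eq_iff_ne (hpos : S ⊆ Set.Ioi 0) {x y : QS S} {s : S}
    (ht : tail s x.1 = tail s y.1) : qdist S x y = s ↔ x.1 s ≠ y.1 s := by
  refine ⟨fun hd hs => ?_, qdist_eq_of_tail_eq_of_ne ht⟩
  by_cases hxy : x = y
  · subst hxy
    exact (hpos s.2).ne (qdist_self x ▸ hd)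
  obtain ⟨t, htd, -, htne⟩ := exists_eq_qdist hxy
  exact htne (Subtype.ext (htd.trans hd) ▸ hs)

/-- `ρ s u` permutes the values of the coordinate `s` of the points with tail `u` above `s`. -/
noncomputable def treeMap (ρ : S → (S → ℕ) → Equiv.Perm ℕ) (hρ : {s | ∃ u, ρ s u 0 ≠ 0}.Finite)
    (x : QS S) : QS S :=
  ⟨fun s => ρ s (tail s x.1) (x.1 s), (x.2.union hρ).subset fun s hs => by
    by_cases hx : x.1 s = 0
    · refine Or.inr ⟨tail s x.1, fun h0 => hs ?_⟩
      change ρ s (tail s x.1) (x.1 s) = 0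
      rw [hx, h0]
    · exact Or.inl hx⟩

section treeMap

variable (ρ : S → (S → ℕ) → Equiv.Perm ℕ) (hρ : {s | ∃ u, ρ s u 0 ≠ 0}.Finite)

theorem treeMap_apply (x : QS S) (s : S) : (treeMap ρ hρ x).1 s = ρ s (tail s x.1) (x.1 s) :=
  rfl

variable {ρ hρ}

theorem tail_treeMap_eq_of_tail_eq {x y : QS S} {s : S} (h : tail s x.1 = tail s y.1) :
    tail s (treeMap ρ hρ x).1 = tail s (treeMap ρ hρ y).1 := by
  rw [tail_eq_tail_iff] at h ⊢
  intro t hst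
  rw [treeMap_apply, treeMap_apply, h t hst,
    tail_eq_tail_iff.2 fun r htr => h r (hst.trans htr)]

theorem treeMap_apply_ne_iff {x y : QS S} {s : S} (h : tail s x.1 = tail s y.1) :
    (treeMap ρ hρ x).1 s ≠ (treeMap ρ hρ y).1 s ↔ x.1 s ≠ y.1 s := by
  rw [treeMap_apply, treeMap_apply, h, (ρ s _).injective.ne_iff]

variable (ρ hρ)

theorem qdist_treeMap (x y : QS S) : qdist S (treeMap ρ hρ x) (treeMap ρ hρ y) = qdist S x y := by
  by_cases hxy : x = y
  · rw [hxy, qdist_self, qdist_self]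
  obtain ⟨s, hs, ht, hne⟩ := exists_eq_qdist hxy
  rw [← hs, qdist_eq_of_tail_eq_of_ne (tail_treeMap_eq_of_tail_eq ht)
    ((treeMap_apply_ne_iff ht).2 hne)]

theorem treeMap_injective : Function.Injective (treeMap ρ hρ) := by
  intro x y hxy
  by_contra hne
  obtain ⟨s, -, ht, hs⟩ := exists_eq_qdist hne
  exact (treeMap_apply_ne_iff ht).2 hs (by rw [hxy])

variable {ρ hρ}

theorem tail_treeMap_eq_iff {x y : QS S} {s : S} :
    tail s (treeMap ρ hρ x).1 = tail s (treeMap ρ hρ y).1 ↔ tail s x.1 = tail s y.1 := by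
  simp only [tail_eq_tail_iff_qdist_le, qdist_treeMap, (treeMap_injective ρ hρ).eq_iff]

variable (ρ hρ)

open Classical in
/-- Well defined because the tail of `treeMap ρ hρ x` above `s` determines that of `x`. -/
noncomputable def treeMapInvPerms (s : S) (v : S → ℕ) : Equiv.Perm ℕ :=
  if h : ∃ x : QS S, tail s (treeMap ρ hρ x).1 = v then (ρ s (tail s h.choose.1))⁻¹ else 1

theorem treeMapInvPerms_tail (x : QS S) (s : S) :
    treeMapInvPerms ρ hρ s (tail s (treeMap ρ hρ x).1) = (ρ s (tail s x.1))⁻¹ := by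
  have h : ∃ z : QS S, tail s (treeMap ρ hρ z).1 = tail s (treeMap ρ hρ x).1 := ⟨x, rfl⟩
  rw [treeMapInvPerms, dif_pos h, tail_treeMap_eq_iff.1 h.choose_spec]

theorem finite_treeMapInvPerms : {s | ∃ v, treeMapInvPerms ρ hρ s v 0 ≠ 0}.Finite := by
  refine hρ.subset fun s ⟨v, hv⟩ => ?_
  by_cases h : ∃ x : QS S, tail s (treeMap ρ hρ x).1 = v
  · refine ⟨tail s h.choose.1, fun h0 => hv ?_⟩
    rw [treeMapInvPerms, dif_pos h, Equiv.Perm.inv_eq_iff_eq, h0]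
  · simp [treeMapInvPerms, h] at hv

theorem leftInverse_treeMap :
    Function.LeftInverse (treeMap _ (finite_treeMapInvPerms ρ hρ)) (treeMap ρ hρ) := fun x =>
  Subtype.ext <| funext fun s => by
    rw [treeMap_apply, treeMapInvPerms_tail, treeMap_apply]
    exact (ρ s _).symm_apply_apply _

noncomputable def treeEquiv : QS S ≃ QS S where
  toFun := treeMap ρ hρ
  invFun := treeMap _ (finite_treeMapInvPerms ρ hρ)
  left_inv := leftInverse_treeMap ρ hρ
  right_inv := (leftInverse_treeMap ρ hρ).rightInverse_of_injective (treeMap_injective _ _)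

end treeMap

theorem apply_eq_iff_of_tail_eq (hpos : S ⊆ Set.Ioi 0) {F : Set (QS S)} {φ : F → QS S}
    (hφ : ∀ a b : F, qdist S (φ a) (φ b) = qdist S a.1 b.1) {a b : F} {s : S}
    (h : tail s a.1.1 = tail s b.1.1) : (φ a).1 s = (φ b).1 s ↔ a.1.1 s = b.1.1 s := by
  have hφt : tail s (φ a).1 = tail s (φ b).1 := by
    rcases tail_eq_tail_iff_qdist_le.1 h with hab | hab
    · rw [Subtype.ext hab]
    · exact tail_eq_tail_iff_qdist_le.2 (Or.inr (hφ a b ▸ hab))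
  exact not_iff_not.1 ((qdist_eq_iff_ne hpos hφt).symm.trans (hφ a b ▸ qdist_eq_iff_ne hpos h))

theorem exists_treeMap_extending (hpos : S ⊆ Set.Ioi 0) {F : Set (QS S)} (hF : F.Finite)
    (φ : F → QS S) (hφ : ∀ a b : F, qdist S (φ a) (φ b) = qdist S a.1 b.1) :
    ∃ (ρ : S → (S → ℕ) → Equiv.Perm ℕ) (hρ : {s | ∃ u, ρ s u 0 ≠ 0}.Finite),
      ∀ a : F, treeMap ρ hρ a.1 = φ a := by
  have : Finite F := hF.to_subtype
  set J : Set S := ⋃ a : F, Function.support a.1.1 ∪ Function.support (φ a).1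
  have hJ : J.Finite := Set.finite_iUnion fun a => a.1.2.union (φ a).2
  have hperm : ∀ s u, ∃ σ : Equiv.Perm ℕ,
      (∀ a : F, tail s a.1.1 = u → σ (a.1.1 s) = (φ a).1 s) ∧ (s ∉ J → σ = 1) := by
    intro s u
    by_cases hs : s ∈ J
    · obtain ⟨σ, hσ⟩ := Equiv.Perm.exists_extending_of_eq_iff_eq
        (fun a : {a : F // tail s a.1.1 = u} => a.1.1.1 s) (fun a => (φ a.1).1 s)
        fun a b => (apply_eq_iff_of_tail_eq hpos hφ (a.2.trans b.2.symm)).symm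
      exact ⟨σ, fun a ha => hσ ⟨a, ha⟩, fun h => (h hs).elim⟩
    · refine ⟨1, fun a _ => ?_, fun _ => rfl⟩
      simp only [J, Set.mem_iUnion, Set.mem_union, Function.mem_support, not_exists, not_or,
        not_not] at hs
      rw [Equiv.Perm.one_apply, (hs a).1, (hs a).2]
  choose ρ hρ_extends hρ_one using hperm
  refine ⟨ρ, hJ.subset fun s ⟨u, hu⟩ => ?_,
    fun a => Subtype.ext (funext fun s => hρ_extends s _ a rfl)⟩
  by_contra hs
  exact hu (by rw [hρ_one s u hs]; rfl)

end QS

open QS in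
theorem stmt9_general (S : Set ℝ) (hpos : S ⊆ Set.Ioi 0)
    (F : Set (QS S)) (hF : F.Finite) (φ : F → QS S)
    (hφ : ∀ a b : F, qdist S (φ a) (φ b) = qdist S a.1 b.1) :
    ∃ Φ : QS S ≃ QS S, (∀ x y : QS S, qdist S (Φ x) (Φ y) = qdist S x y) ∧
      ∀ a : F, Φ a.1 = φ a := by
  obtain ⟨ρ, hρ, hextends⟩ := exists_treeMap_extending hpos hF φ hφ
  exact ⟨treeEquiv ρ hρ, qdist_treeMap ρ hρ, hextends⟩

/-- `Q_S` is ultrahomogeneous: every isometry between two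
finite subsets of `Q_S` extends to a surjective self-isometry of `Q_S`. -/
theorem stmt9 (S : Set ℝ) (hpos : S ⊆ Set.Ioi 0) (hcount : S.Countable)
    (F : Set (QS S)) (hF : F.Finite) (φ : F → QS S)
    (hφ : ∀ a b : F, qdist S (φ a) (φ b) = qdist S a.1 b.1) :
    ∃ Φ : QS S ≃ QS S, (∀ x y : QS S, qdist S (Φ x) (Φ y) = qdist S x y) ∧
      ∀ a : F, Φ a.1 = φ a :=
  stmt9_general S hpos F hF φ hφ
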